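/- arXiv:1901.06277 — 2 statements merged into one kernel-verified Lean document; each statement's English description precedes it below -/
import Mathlib

section
/- Let A1, A2, A3 > 0 be real numbers and suppose x is a real number satisfying x^4 - A1*x^3 - A2*x^2 - A3 ≤ 0. Then x ≤ A1 + sqrt(A2 + sqrt(A3)). -/
theorem quartic_root_bound (A1 A2 A3 x : ℝ) (hA1 : 0 < A1) (hA2 : 0 < A2)
    (hA3 : 0 < A3) (hx : x ^ 4 - A1 * x ^ 3 - A2 * x ^ 2 - A3 ≤ 0) :
    x ≤ A1 + Real.sqrt (A2 + Real.sqrt A3) := by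
  by_contra h
  push_neg at h
  set t := Real.sqrt A3 with ht
  set s := Real.sqrt (A2 + t) with hs
  have ht0 : 0 < t := Real.sqrt_pos.mpr hA3
  have ht2 : t ^ 2 = A3 := Real.sq_sqrt hA3.le
  have hs0 : 0 < s := Real.sqrt_pos.mpr (by linarith)
  have hs2 : s ^ 2 = A2 + t := Real.sq_sqrt (by linarith)
  have hxpos : 0 < x := by linarith
  nlinarith [mul_pos (mul_pos hxpos hxpos) hxpos, mul_pos hxpos hxpos,
    mul_pos hs0 ht0, sq_nonneg (x - s), sq_nonneg (x*s - t),
    mul_pos (mul_pos hxpos hxpos) hs0, mul_lt_mul_of_pos_left h (mul_pos (mul_pos hxpos hxpos) hxpos)]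
end

section
/- Let b ≥ 1. Then any λ ∈ (0, b^2) satisfying (1 + e^{-2μ})/(1 - e^{-2μ}) * μ = b with μ = sqrt(b^2 - λ) satisfies λ ≤ 8*b^2*e^{-2b}. -/
lemma aux_exp_two_x (x : ℝ) (hx0 : 0 < x) (hx1 : x < 1) :
    Real.exp (2 * x) ≤ 2 * (1 + x ^ 2) ^ 2 := by
  have hE : Real.exp x ≤ 1 + x + x ^ 2 / 2 + x ^ 3 / 6 + 5 / 96 * x ^ 4 := by
    have h := Real.exp_bound (x := x) (by rw [abs_of_pos hx0]; linarith) (n := 4) (by norm_num)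
    have hs : ∑ i ∈ Finset.range 4, x ^ i / (Nat.factorial i : ℝ) =
        1 + x + x ^ 2 / 2 + x ^ 3 / 6 := by
      norm_num [Finset.sum_range_succ, Nat.factorial]
    rw [hs, abs_of_pos hx0] at h
    have h2 := (abs_le.mp h).2
    norm_num [Nat.factorial] at h2
    linarith
  have hE2 : 1 + x + x ^ 2 / 2 + x ^ 3 / 6 + 5 / 96 * x ^ 4 ≤ 141 / 100 * (1 + x ^ 2) := by
    nlinarith [sq_nonneg (x - 3/4), sq_nonneg x, mul_nonneg (mul_nonneg hx0.le hx0.le) hx0.le,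
      sq_nonneg (x - 1), mul_nonneg (sq_nonneg (x - 3/4)) hx0.le,
      mul_nonneg (sq_nonneg (x - 1)) (sq_nonneg x)]
  have hxx : Real.exp (2 * x) = Real.exp x * Real.exp x := by
    rw [← Real.exp_add]; ring_nf
  rw [hxx]
  have hEpos : 0 < Real.exp x := Real.exp_pos _
  have hEb : Real.exp x ≤ 141 / 100 * (1 + x ^ 2) := le_trans hE hE2
  nlinarith [hEb, hEpos, sq_nonneg x, sq_nonneg (1 + x ^ 2)]

theorem eigenvalue_asymptotic_bound (b lam : ℝ) (hb : 1 ≤ b)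
    (hlam : lam ∈ Set.Ioo 0 (b ^ 2))
    (heq : Real.sqrt (b ^ 2 - lam) *
        ((1 + Real.exp (-2 * Real.sqrt (b ^ 2 - lam))) /
          (1 - Real.exp (-2 * Real.sqrt (b ^ 2 - lam)))) = b) :
    lam ≤ 8 * b ^ 2 * Real.exp (-2 * b) := by
  obtain ⟨hl0, hlb⟩ := hlam
  set μ := Real.sqrt (b ^ 2 - lam) with hμdef
  have hb0 : (0:ℝ) < b := lt_of_lt_of_le one_pos hb
  have hsub : 0 < b ^ 2 - lam := by linarith
  have hμ0 : 0 < μ := Real.sqrt_pos.mpr hsub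
  have hμsq : μ ^ 2 = b ^ 2 - lam := Real.sq_sqrt hsub.le
  set q := Real.exp (-2 * μ) with hqdef
  have hq0 : 0 < q := Real.exp_pos _
  have hq1 : q < 1 := by
    rw [hqdef, Real.exp_lt_one_iff]
    nlinarith
  have h1q : (1:ℝ) - q ≠ 0 := by linarith
  -- key algebraic relation
  have hkey : μ * (1 + q) = b * (1 - q) := by
    field_simp at heq
    linarith [heq]
  -- exact eigenvalue formula : lam * (1+q)^2 = 4 b^2 q
  have hsq2 : (μ * (1 + q)) ^ 2 = (b * (1 - q)) ^ 2 := by rw [hkey]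
  have hA : lam * (1 + q) ^ 2 = 4 * b ^ 2 * q := by
    linear_combination (1 + q) ^ 2 * hμsq - hsq2
  clear_value μ q
  clear heq
  -- set x = exp(-μ)
  set x := Real.exp (-μ) with hxdef
  clear_value x
  have hx0 : 0 < x := hxdef ▸ Real.exp_pos _
  have hx1 : x < 1 := by
    rw [hxdef, Real.exp_lt_one_iff]; linarith
  have hqx : q = x ^ 2 := by
    rw [hqdef, hxdef, sq, ← Real.exp_add]; ring_nf
  have hxinv : x * Real.exp μ = 1 := by
    rw [hxdef, ← Real.exp_add]; simp
  -- sinh bound: 2 μ ≤ exp μ - exp (-μ)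
  have hsinh : 2 * μ ≤ Real.exp μ - Real.exp (-μ) := by
    have h := Real.self_lt_sinh_iff.mpr hμ0
    rw [Real.sinh_eq] at h
    linarith
  -- b - μ ≤ x
  have hbμ : b - μ ≤ x := by
    -- b - μ = q (b + μ) and (b + μ)(1 - q) = 2 μ
    have h2 : (b + μ) * (1 - q) = 2 * μ := by nlinarith [hkey]
    have h3 : b - μ = q * (b + μ) := by nlinarith [hkey]
    -- 2 μ x ≤ 1 - x^2, from sinh bound times x
    have h4 : 2 * μ * x ≤ 1 - x ^ 2 := by
      have h5 := mul_le_mul_of_nonneg_right hsinh hx0.le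
      have h6 : Real.exp (-μ) * x = x ^ 2 := by rw [← hxdef, sq]
      nlinarith [hxinv]
    rw [h3, hqx]
    have h1x2 : 0 < 1 - x ^ 2 := by nlinarith
    rw [hqx] at h2
    have h7 : x ^ 2 * (b + μ) * (1 - x ^ 2) = 2 * μ * x ^ 2 := by
      linear_combination x ^ 2 * h2
    have h8 : 2 * μ * x ^ 2 ≤ x * (1 - x ^ 2) := by
      nlinarith [mul_le_mul_of_nonneg_right h4 hx0.le]
    have h9 : x ^ 2 * (b + μ) * (1 - x ^ 2) ≤ x * (1 - x ^ 2) := by linarith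
    exact le_of_mul_le_mul_right h9 h1x2
  -- q * exp (2b) = exp (2(b-μ)) ≤ exp (2x) ≤ 2 (1+x^2)^2 = 2 (1+q)^2
  have hB : q * Real.exp (2 * b) ≤ 2 * (1 + q) ^ 2 := by
    have hqe : q * Real.exp (2 * b) = Real.exp (2 * (b - μ)) := by
      rw [hqdef, ← Real.exp_add]; ring_nf
    rw [hqe, hqx]
    calc Real.exp (2 * (b - μ)) ≤ Real.exp (2 * x) :=
          Real.exp_le_exp.mpr (by linarith)
      _ ≤ 2 * (1 + x ^ 2) ^ 2 := aux_exp_two_x x hx0 hx1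
  -- conclude
  have h1q2 : (0:ℝ) < (1 + q) ^ 2 := by positivity
  have hfin : lam * Real.exp (2 * b) ≤ 8 * b ^ 2 := by
    have hmul : lam * Real.exp (2 * b) * (1 + q) ^ 2 ≤ 8 * b ^ 2 * (1 + q) ^ 2 := by
      have h5 : lam * (1 + q) ^ 2 * Real.exp (2 * b) = 4 * b ^ 2 * (q * Real.exp (2 * b)) := by
        rw [hA]; ring
      have h6 : 4 * b ^ 2 * (q * Real.exp (2 * b)) ≤ 4 * b ^ 2 * (2 * (1 + q) ^ 2) :=
        mul_le_mul_of_nonneg_left hB (by positivity)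
      linarith [h5, h6]
    exact le_of_mul_le_mul_right hmul h1q2
  calc lam = lam * Real.exp (2 * b) * Real.exp (-2 * b) := by
        rw [mul_assoc, ← Real.exp_add, show 2 * b + -2 * b = 0 by ring, Real.exp_zero, mul_one]
    _ ≤ 8 * b ^ 2 * Real.exp (-2 * b) :=
        mul_le_mul_of_nonneg_right hfin (Real.exp_pos _).le
end
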